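/- In an acyclic b-matching preference instance, starting from any configuration, every maximal sequence of active initiatives (i.e., one ending at a configuration that admits no blocking pair) is finite and terminates at the unique stable configuration of the instance. -/

import Mathlib

/-!
A formalization of b-matching preference instances (peers, acceptance graph,
quotas, preference lists given by ranks), configurations, blocking pairs,
stability, active initiatives, loving pairs, and acyclicity.
-/

open Finset

/-- A b-matching preference instance on a finite set `P` of peers:
an acceptance graph `G`, quotas `b`, and for each peer `p` a rank function
(`rank p q` is the position of `q` in `p`'s preference list, smaller is better),
injective on the neighbors of `p` (strict preferences). -/
structure PrefInstance (P : Type*) [Fintype P] [DecidableEq P] where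
  G : SimpleGraph P
  b : P → ℕ
  rank : P → P → ℕ
  rank_injOn : ∀ p : P, Set.InjOn (rank p) {q | G.Adj p q}

namespace PrefInstance

variable {P : Type*} [Fintype P] [DecidableEq P] (I : PrefInstance P)

/-- `p` prefers `q` to `r` (both neighbors of `p`, `q` ranked better). -/
def Prefers (p q r : P) : Prop :=
  I.G.Adj p q ∧ I.G.Adj p r ∧ I.rank p q < I.rank p r

/-- The instance is acyclic: there is no preference cycle, i.e. no `k ≥ 3`
distinct peers `p_1, …, p_k` (indices modulo `k`) such that each `p_i`
prefers `p_{i+1}` to `p_{i-1}`. -/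
def Acyclic : Prop :=
  ¬ ∃ (k : ℕ) (f : ZMod k → P), 3 ≤ k ∧ Function.Injective f ∧
      ∀ i : ZMod k, I.Prefers (f i) (f (i + 1)) (f (i - 1))

/-- The mates of `p` in a set `C` of edges. -/
def mates (C : Finset (Sym2 P)) (p : P) : Finset P :=
  Finset.univ.filter fun q => s(p, q) ∈ C

/-- `C` is a configuration: a set of edges of the acceptance graph in which every
peer `p` has at most `b p` mates. -/
def IsConfig (C : Finset (Sym2 P)) : Prop :=
  (∀ e ∈ C, e ∈ I.G.edgeSet) ∧ ∀ p : P, (mates C p).card ≤ I.b p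

/-- `p` is under-mated in `C`: it has fewer than `b p` mates. -/
def UnderMated (C : Finset (Sym2 P)) (p : P) : Prop :=
  (mates C p).card < I.b p

/-- `p` is willing to pair with `q`: it is under-mated, or it prefers `q`
to its worst mate in `C`. -/
def Willing (C : Finset (Sym2 P)) (p q : P) : Prop :=
  I.UnderMated C p ∨ ∃ w ∈ mates C p, I.rank p q < I.rank p w

/-- `{p, q}` is a blocking pair for `C`: an edge of the acceptance graph not in
`C` such that each endpoint is under-mated or prefers the other to its worst mate. -/
def BlockingPair (C : Finset (Sym2 P)) (p q : P) : Prop :=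
  I.G.Adj p q ∧ s(p, q) ∉ C ∧ I.Willing C p q ∧ I.Willing C q p

/-- A configuration is stable if it admits no blocking pair. -/
def IsStable (C : Finset (Sym2 P)) : Prop :=
  I.IsConfig C ∧ ∀ p q : P, ¬ I.BlockingPair C p q

/-- The edges to be dropped at `p` when `p` gets a new mate: none if `p` is
under-mated, otherwise the edge joining `p` to its worst mate in `C`. -/
def dropEdges (C : Finset (Sym2 P)) (p : P) : Finset (Sym2 P) :=
  if (mates C p).card < I.b p then ∅
  else ((mates C p).filter fun w => ∀ r ∈ mates C p, I.rank p r ≤ I.rank p w).image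
      fun w => s(p, w)

/-- The configuration produced by resolving the blocking pair `{p, q}` of `C`:
add the edge `{p, q}` and, for each of `p` and `q` already at full quota,
remove the edge joining it to its worst mate. -/
def resolve (C : Finset (Sym2 P)) (p q : P) : Finset (Sym2 P) :=
  insert s(p, q) (C \ (I.dropEdges C p ∪ I.dropEdges C q))

/-- `C'` is obtained from `C` by an active initiative. -/
def ActiveStep (C C' : Finset (Sym2 P)) : Prop :=
  ∃ p q : P, I.BlockingPair C p q ∧ C' = I.resolve C p q

/-- `{p, q}` is a loving pair: an edge of the acceptance graph whose endpoints
rank each other first. -/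
def LovingPair (p q : P) : Prop :=
  I.G.Adj p q ∧ (∀ r : P, I.G.Adj p r → I.rank p q ≤ I.rank p r) ∧
    ∀ r : P, I.G.Adj q r → I.rank q p ≤ I.rank q r

open scoped Classical in
/-- The best-mate initiative of peer `p` at configuration `C`: resolve the
blocking pair `{p, q}` where `q` is the peer `p` prefers most among all peers
forming a blocking pair with `p`; if `p` belongs to no blocking pair, `C` is
left unchanged. -/
noncomputable def bestMateInit (C : Finset (Sym2 P)) (p : P) : Finset (Sym2 P) :=
  if h : ∃ q : P, I.BlockingPair C p q ∧
      ∀ r : P, I.BlockingPair C p r → I.rank p q ≤ I.rank p r then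
    I.resolve C p h.choose
  else C

end PrefInstance

variable {P : Type*} [Fintype P] [DecidableEq P]

open PrefInstance


/-!
An acyclic instance has no closed preference walk, i.e. no closed walk in which every peer
prefers its successor to its predecessor: on a shortest one a repeated peer would split it
into two shorter closed walks, and comparing the four neighbours of the repeated peer shows
that one of them is again a preference walk; a closed preference walk without repetitions is
a preference cycle. Hence the steps `(x, v) ⟶ (v, y)` of preference walks form a well-founded
relation on oriented pairs.

Counting the oriented pairs from which a walk leads to an edge ranks the edges so that each
peer's preferences strictly increase the rank. With weight `3 ^ rank`, resolving a blocking
pair adds an edge that outweighs the (at most two) edges it drops, so the total weight of the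
configuration increases strictly and no sequence of active initiatives is infinite. Finally,
an edge in one stable configuration but not in another starts an infinite preference walk
that alternates between edges of the two configurations, so stable configurations coincide.
-/

namespace PrefInstance

open Relation

variable {I : PrefInstance P} {C C' D : Finset (Sym2 P)} {p q r x y w : P}

section PreferenceWalks

variable (I) in
def IsPrefWalk (g : ℕ → P) : Prop :=
  ∀ i, I.Prefers (g (i + 1)) (g (i + 2)) (g i)

lemma not_prefers_self {v a : P} : ¬ I.Prefers v a a :=
  fun h => h.2.2.false

lemma Prefers.trans {v a b c : P} (hab : I.Prefers v a b) (hbc : I.Prefers v b c) :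
    I.Prefers v a c :=
  ⟨hab.1, hbc.2.1, hab.2.2.trans hbc.2.2⟩

lemma prefers_or_prefers {v a b c d : P} (hab : I.Prefers v a b) (hcd : I.Prefers v c d) :
    I.Prefers v a d ∨ I.Prefers v c b := by
  obtain ⟨ha, hb, hab⟩ := hab
  obtain ⟨hc, hd, hcd⟩ := hcd
  rcases lt_or_ge (I.rank v a) (I.rank v d) with had | hda
  · exact Or.inl ⟨ha, hd, had⟩
  · exact Or.inr ⟨hc, hb, by omega⟩

lemma IsPrefWalk.comp_add {g : ℕ → P} (hg : I.IsPrefWalk g) (c : ℕ) :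
    I.IsPrefWalk fun k => g (k + c) := by
  intro i
  simpa only [Nat.add_right_comm i _ c] using hg (i + c)

lemma IsPrefWalk.mod {g : ℕ → P} (hg : I.IsPrefWalk g) {m : ℕ} (hm : 0 < m)
    (hgm : g m = g 0) (hclose : I.Prefers (g 0) (g 1) (g (m - 1))) :
    I.IsPrefWalk fun k => g (k % m) := by
  have hle : ∀ k ≤ m, g (k % m) = g k := by
    intro k hk
    rcases hk.lt_or_eq with hk | rfl
    · rw [Nat.mod_eq_of_lt hk]
    · rw [Nat.mod_self, hgm]
  intro i
  simp only [← Nat.mod_add_mod i m]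
  have hi : i % m < m := Nat.mod_lt _ hm
  by_cases hi2 : i % m + 2 ≤ m
  · rw [hle (i % m + 1) (by omega), hle _ hi2]
    exact hg _
  · rw [show i % m = m - 1 by omega, Nat.sub_add_cancel hm, show m - 1 + 2 = 1 + m by omega,
      Nat.add_mod_right, Nat.mod_self, hle 1 hm]
    exact hclose

lemma not_acyclic_of_injOn {g : ℕ → P} (hg : I.IsPrefWalk g) {n : ℕ}
    (hper : Function.Periodic g n) (hn : 0 < n) (hinj : Set.InjOn g (Set.Iio n)) :
    ¬ I.Acyclic := by
  have hn3 : 3 ≤ n := by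
    by_contra! hn3
    have h2 : g 2 = g 0 := by
      rw [← hper.map_mod_nat 2, show 2 % n = 0 by interval_cases n <;> rfl]
    have := hg 0
    rw [h2] at this
    exact not_prefers_self this
  have : NeZero n := ⟨hn.ne'⟩
  have hcast : ∀ k : ℕ, g (k : ZMod n).val = g k := fun k => by
    rw [ZMod.val_natCast, hper.map_mod_nat]
  refine fun hI => hI ⟨n, fun i => g i.val, hn3, fun i j hij => ?_, fun i => ?_⟩
  · exact ZMod.val_injective n (hinj (ZMod.val_lt i) (ZMod.val_lt j) hij)
  · obtain ⟨k, hk⟩ : ∃ k : ℕ, i - 1 = k :=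
      ⟨(i - 1).val, (ZMod.natCast_zmod_val _).symm⟩
    have hi : i = ((k + 1 : ℕ) : ZMod n) := by push_cast [← hk]; ring
    have hi1 : i + 1 = ((k + 2 : ℕ) : ZMod n) := by push_cast [hi]; ring
    rw [hi1, hk, hi]
    simp only [hcast]
    exact hg k

lemma not_acyclic_of_periodic {g : ℕ → P} (hg : I.IsPrefWalk g) {n : ℕ}
    (hper : Function.Periodic g n) (hn : 0 < n) : ¬ I.Acyclic := by
  induction n using Nat.strong_induction_on generalizing g with
  | _ n ih =>
  by_cases hinj : Set.InjOn g (Set.Iio n)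
  · exact not_acyclic_of_injOn hg hper hn hinj
  obtain ⟨a, b, hb, hab, hlt⟩ : ∃ a b, b < n ∧ g a = g b ∧ a < b := by
    simp only [Set.InjOn, Set.mem_Iio, not_forall] at hinj
    obtain ⟨a, ha, b, hb, hab, hne⟩ := hinj
    rcases lt_or_gt_of_ne hne with h | h
    · exact ⟨a, b, hb, hab, h⟩
    · exact ⟨b, a, ha, hab.symm, h⟩
  -- Shift so that the repeated peer `v` sits at `0` and `m`; it splits the walk into the
  -- closed walks `0 … m` and `m … n`, and one of them turns correctly at `v`.
  set g' : ℕ → P := fun k => g (k + a) with hg'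
  set m := b - a
  have hwalk : I.IsPrefWalk g' := hg.comp_add a
  have hper' : Function.Periodic g' n := fun k => by
    simp only [hg']
    rw [Nat.add_right_comm, hper]
  have hm : g' m = g' 0 := by
    simp only [hg', m]
    rw [Nat.sub_add_cancel hlt.le, zero_add, hab]
  have hturn₀ : I.Prefers (g' 0) (g' 1) (g' (n - 1)) := by
    have := hwalk (n - 1)
    rwa [Nat.sub_add_cancel hn, show n - 1 + 2 = 1 + n by omega, hper', hper'.eq] at this
  have hturnₘ : I.Prefers (g' 0) (g' (m + 1)) (g' (m - 1)) := by
    have := hwalk (m - 1)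
    rwa [Nat.sub_add_cancel (by omega : 0 < m), show m - 1 + 2 = m + 1 by omega, hm] at this
  rcases prefers_or_prefers hturn₀ hturnₘ with hclose | hclose
  · exact ih m (by omega) (hwalk.mod (by omega) hm hclose) ((Nat.periodic_mod m).comp g')
      (by omega)
  · refine ih (n - m) (by omega) ((hwalk.comp_add m).mod (m := n - m) (by omega) ?_ ?_)
      ((Nat.periodic_mod (n - m)).comp fun k => g' (k + m)) (by omega)
    · show g' (n - m + m) = g' (0 + m)
      rw [Nat.sub_add_cancel (by omega), zero_add, hper'.eq, hm]
    · show I.Prefers (g' (0 + m)) (g' (1 + m)) (g' (n - m - 1 + m))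
      rwa [zero_add, hm, add_comm 1 m, show n - m - 1 + m = n - 1 by omega]

theorem not_isPrefWalk (hI : I.Acyclic) (g : ℕ → P) : ¬ I.IsPrefWalk g := by
  intro hg
  obtain ⟨i, j, hij, hgij⟩ := Set.finite_univ.exists_lt_map_eq_of_forall_mem
    (f := fun k => (g k, g (k + 1))) (fun _ => Set.mem_univ _)
  obtain ⟨hgi, hgi₁⟩ := Prod.mk.inj hgij
  set g' : ℕ → P := fun k => g (k + i) with hg'
  set m := j - i
  have hwalk : I.IsPrefWalk g' := hg.comp_add i
  have hm : g' m = g' 0 := by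
    simp only [hg', m]
    rw [Nat.sub_add_cancel hij.le, zero_add, hgi]
  have hm₁ : g' (m + 1) = g' 1 := by
    simp only [hg', m]
    rw [show j - i + 1 + i = j + 1 by omega, add_comm 1 i, hgi₁]
  have hclose := hwalk (m - 1)
  rw [Nat.sub_add_cancel (by omega : 0 < m), show m - 1 + 2 = m + 1 by omega, hm, hm₁]
    at hclose
  exact not_acyclic_of_periodic (hwalk.mod (by omega) hm hclose)
    ((Nat.periodic_mod m).comp g') (show 0 < m by omega) hI

end PreferenceWalks

section EdgeWeights

variable (I) in
/-- `(x, v) ⟶ (v, y)`: a preference walk goes from `x` through `v` to a neighbour `y` that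
`v` prefers to `x`. -/
def PivotStep (u w : P × P) : Prop :=
  u.2 = w.1 ∧ I.Prefers w.1 w.2 u.1

theorem wellFounded_pivotStep (hI : I.Acyclic) : WellFounded (flip I.PivotStep) := by
  refine wellFounded_iff_isEmpty_descending_chain.2 ⟨fun ⟨f, hf⟩ => ?_⟩
  refine not_isPrefWalk hI (fun n => (f n).1) fun n => ?_
  show I.Prefers (f (n + 1)).1 (f (n + 1 + 1)).1 (f n).1
  rw [← (hf (n + 1)).1]
  exact (hf n).2

theorem not_transGen_pivotStep_self (hI : I.Acyclic) (u : P × P) :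
    ¬ TransGen I.PivotStep u u := by
  rw [← transGen_swap]
  exact (wellFounded_pivotStep hI).transGen.irrefl.irrefl u

lemma transGen_pivotStep_of_prefers {u : P × P} {v b c : P}
    (h : TransGen I.PivotStep u (v, b)) (hc : I.Prefers v c b) :
    TransGen I.PivotStep u (v, c) := by
  obtain ⟨w, hw, hwv, hbw⟩ := TransGen.tail'_iff.1 h
  exact TransGen.tail'_iff.2 ⟨w, hw, hwv, hc.trans hbw⟩

theorem not_transGen_pivotStep_swap (hI : I.Acyclic) (x v : P) :
    ¬ TransGen I.PivotStep (x, v) (v, x) := by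
  intro h
  obtain ⟨⟨v', y⟩, ⟨rfl, hyx⟩, hrest⟩ := TransGen.head'_iff.1 h
  rcases reflTransGen_iff_eq_or_transGen.1 hrest with hyx' | hcycle
  · cases hyx'
    exact not_prefers_self hyx
  · exact not_transGen_pivotStep_self hI _ (transGen_pivotStep_of_prefers hcycle hyx)

variable (I) in
open scoped Classical in
noncomputable def edgePreds (e : Sym2 P) : Finset (P × P) :=
  univ.filter fun u => ∃ a b : P, s(a, b) = e ∧ TransGen I.PivotStep u (a, b)

theorem edgePreds_ssubset (hI : I.Acyclic) {v x y : P} (h : I.Prefers v y x) :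
    I.edgePreds s(v, x) ⊂ I.edgePreds s(v, y) := by
  classical
  have hstep : I.PivotStep (x, v) (v, y) := ⟨rfl, h⟩
  refine (ssubset_iff_of_subset fun u hu => ?_).2 ⟨(x, v), ?_, fun hx => ?_⟩
  · simp only [edgePreds, mem_filter, mem_univ, true_and] at hu ⊢
    obtain ⟨a, b, hab, hu⟩ := hu
    refine ⟨v, y, rfl, ?_⟩
    rcases Sym2.eq_iff.1 hab with ⟨rfl, rfl⟩ | ⟨rfl, rfl⟩
    · exact transGen_pivotStep_of_prefers hu h
    · exact hu.tail hstep
  · simp only [edgePreds, mem_filter, mem_univ, true_and]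
    exact ⟨v, y, rfl, .single hstep⟩
  · simp only [edgePreds, mem_filter, mem_univ, true_and] at hx
    obtain ⟨a, b, hab, hx⟩ := hx
    rcases Sym2.eq_iff.1 hab with ⟨rfl, rfl⟩ | ⟨rfl, rfl⟩
    · exact not_transGen_pivotStep_swap hI _ _ hx
    · exact not_transGen_pivotStep_self hI _ hx

variable (I) in
/-- Base `3`, so that one new edge outweighs the two edges an initiative may drop. -/
noncomputable def edgeWeight (e : Sym2 P) : ℕ :=
  3 ^ #(I.edgePreds e)

theorem three_mul_edgeWeight_le (hI : I.Acyclic) {v x y : P} (h : I.Prefers v y x) :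
    3 * I.edgeWeight s(v, x) ≤ I.edgeWeight s(v, y) := by
  rw [edgeWeight, edgeWeight, ← pow_succ']
  exact Nat.pow_le_pow_right (by norm_num) (card_lt_card (edgePreds_ssubset hI h))

end EdgeWeights

section Configurations

@[simp]
lemma mem_mates : q ∈ mates C p ↔ s(p, q) ∈ C := by
  simp [mates]

lemma mates_mono (h : C ⊆ C') : mates C p ⊆ mates C' p :=
  fun _ hq => mem_mates.2 (h (mem_mates.1 hq))

lemma mates_insert_self : mates (insert s(p, q) C) p = insert q (mates C p) := by
  ext r
  simp only [mem_mates, mem_insert, Sym2.congr_right]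

lemma mates_insert_of_ne (hrp : r ≠ p) (hrq : r ≠ q) :
    mates (insert s(p, q) C) r = mates C r := by
  ext w
  simp [hrp, hrq]

lemma mates_erase : mates (C.erase s(p, q)) p = (mates C p).erase q := by
  ext r
  simp only [mem_mates, mem_erase, ne_eq, Sym2.congr_right]

lemma IsConfig.adj (hC : I.IsConfig C) (h : q ∈ mates C p) : I.G.Adj p q :=
  hC.1 _ (mem_mates.1 h)

lemma BlockingPair.symm (h : I.BlockingPair C p q) : I.BlockingPair C q p :=
  ⟨h.1.symm, by rw [Sym2.eq_swap]; exact h.2.1, h.2.2.2, h.2.2.1⟩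

lemma resolve_comm : I.resolve C p q = I.resolve C q p := by
  rw [resolve, resolve, Sym2.eq_swap, union_comm]

lemma dropEdges_subset : I.dropEdges C p ⊆ C := by
  unfold dropEdges
  split_ifs
  · exact empty_subset _
  · simp only [image_subset_iff, mem_filter, and_imp]
    exact fun _ hw _ => mem_mates.1 hw

lemma dropEdges_of_underMated (h : I.UnderMated C p) : I.dropEdges C p = ∅ :=
  if_pos h

lemma exists_dropEdges_eq_singleton (hC : I.IsConfig C) (hB : I.BlockingPair C p q)
    (hfull : ¬ I.UnderMated C p) :
    ∃ w ∈ mates C p, I.dropEdges C p = {s(p, w)} ∧ I.Prefers p q w := by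
  obtain ⟨w₀, hw₀, hqw₀⟩ := hB.2.2.1.resolve_left hfull
  obtain ⟨w, hw, hmax⟩ := exists_max_image (mates C p) (I.rank p) ⟨w₀, hw₀⟩
  refine ⟨w, hw, ?_, hB.1, hC.adj hw, hqw₀.trans_le (hmax w₀ hw₀)⟩
  have hworst : (mates C p).filter (fun w' => ∀ r ∈ mates C p, I.rank p r ≤ I.rank p w') =
      {w} := by
    refine eq_singleton_iff_unique_mem.2 ⟨mem_filter.2 ⟨hw, hmax⟩, fun r hr => ?_⟩
    obtain ⟨hr, hrmax⟩ := mem_filter.1 hr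
    exact I.rank_injOn p (hC.adj hr) (hC.adj hw) ((hmax r hr).antisymm (hrmax w hw))
  rw [dropEdges, if_neg (show ¬ #(mates C p) < I.b p from hfull), hworst, image_singleton]

lemma card_mates_sdiff_dropEdges_lt (hC : I.IsConfig C) (hB : I.BlockingPair C p q) :
    #(mates (C \ I.dropEdges C p) p) < I.b p := by
  by_cases hfull : I.UnderMated C p
  · rwa [dropEdges_of_underMated hfull, sdiff_empty]
  obtain ⟨w, hw, hdrop, -⟩ := exists_dropEdges_eq_singleton hC hB hfull
  rw [hdrop, sdiff_singleton_eq_erase, mates_erase, card_erase_of_mem hw]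
  have := card_pos.2 ⟨w, hw⟩
  have := hC.2 p
  omega

lemma card_mates_resolve_le (hC : I.IsConfig C) (hB : I.BlockingPair C p q) :
    #(mates (I.resolve C p q) p) ≤ I.b p := by
  have hsub : I.resolve C p q ⊆ insert s(p, q) (C \ I.dropEdges C p) :=
    insert_subset_insert _ (sdiff_subset_sdiff le_rfl subset_union_left)
  calc #(mates (I.resolve C p q) p)
      ≤ #(insert q (mates (C \ I.dropEdges C p) p)) := by
        rw [← mates_insert_self]; exact card_le_card (mates_mono hsub)
    _ ≤ #(mates (C \ I.dropEdges C p) p) + 1 := card_insert_le _ _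
    _ ≤ I.b p := card_mates_sdiff_dropEdges_lt hC hB

lemma isConfig_resolve (hC : I.IsConfig C) (hB : I.BlockingPair C p q) :
    I.IsConfig (I.resolve C p q) := by
  refine ⟨fun e he => ?_, fun r => ?_⟩
  · rcases mem_insert.1 he with rfl | he
    · exact hB.1
    · exact hC.1 e (mem_sdiff.1 he).1
  · by_cases hrp : r = p
    · subst hrp
      exact card_mates_resolve_le hC hB
    by_cases hrq : r = q
    · subst hrq
      rw [resolve_comm]
      exact card_mates_resolve_le hC hB.symm
    calc #(mates (I.resolve C p q) r)
        ≤ #(mates (insert s(p, q) C) r) :=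
          card_le_card (mates_mono (insert_subset_insert _ sdiff_subset))
      _ = #(mates C r) := by rw [mates_insert_of_ne hrp hrq]
      _ ≤ I.b r := hC.2 r

lemma ActiveStep.isConfig (hC : I.IsConfig C) (h : I.ActiveStep C C') : I.IsConfig C' := by
  obtain ⟨p, q, hB, rfl⟩ := h
  exact isConfig_resolve hC hB

lemma isConfig_of_forall_activeStep {f : ℕ → Finset (Sym2 P)} {k : ℕ} (h0 : I.IsConfig (f 0))
    (hf : ∀ i < k, I.ActiveStep (f i) (f (i + 1))) : I.IsConfig (f k) := by
  induction k with
  | zero => exact h0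
  | succ k ih =>
    exact (hf k k.lt_succ_self).isConfig (ih fun i hi => hf i (hi.trans k.lt_succ_self))

end Configurations

section Potential

variable (I) in
noncomputable def potential (C : Finset (Sym2 P)) : ℕ :=
  ∑ e ∈ C, I.edgeWeight e

lemma three_mul_sum_dropEdges_le (hI : I.Acyclic) (hC : I.IsConfig C)
    (hB : I.BlockingPair C p q) :
    3 * ∑ e ∈ I.dropEdges C p, I.edgeWeight e ≤ I.edgeWeight s(p, q) := by
  by_cases hfull : I.UnderMated C p
  · simp [dropEdges_of_underMated hfull]
  obtain ⟨w, -, hdrop, hpref⟩ := exists_dropEdges_eq_singleton hC hB hfull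
  rw [hdrop, sum_singleton]
  exact three_mul_edgeWeight_le hI hpref

lemma potential_lt_potential_resolve (hI : I.Acyclic) (hC : I.IsConfig C)
    (hB : I.BlockingPair C p q) : I.potential C < I.potential (I.resolve C p q) := by
  have hp := three_mul_sum_dropEdges_le hI hC hB
  have hq := three_mul_sum_dropEdges_le hI hC hB.symm
  rw [Sym2.eq_swap] at hq
  have hD := sum_union_inter (s₁ := I.dropEdges C p) (s₂ := I.dropEdges C q) (f := I.edgeWeight)
  have hpos : 0 < I.edgeWeight s(p, q) := by unfold edgeWeight; positivity
  have hDC : I.dropEdges C p ∪ I.dropEdges C q ⊆ C :=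
    union_subset dropEdges_subset dropEdges_subset
  have hCD := sum_sdiff (f := I.edgeWeight) hDC
  have hnew : s(p, q) ∉ C \ (I.dropEdges C p ∪ I.dropEdges C q) :=
    fun h => hB.2.1 (mem_sdiff.1 h).1
  rw [potential, potential, resolve, sum_insert hnew]
  omega

lemma ActiveStep.potential_lt (hI : I.Acyclic) (hC : I.IsConfig C) (h : I.ActiveStep C C') :
    I.potential C < I.potential C' := by
  obtain ⟨p, q, hB, rfl⟩ := h
  exact potential_lt_potential_resolve hI hC hB

theorem not_forall_activeStep (hI : I.Acyclic) {f : ℕ → Finset (Sym2 P)}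
    (h0 : I.IsConfig (f 0)) : ¬ ∀ i, I.ActiveStep (f i) (f (i + 1)) := by
  intro hf
  have hmono : StrictMono (I.potential ∘ f) := strictMono_nat_of_lt_succ fun i =>
    (hf i).potential_lt hI (isConfig_of_forall_activeStep h0 fun j _ => hf j)
  have hbound : I.potential (f (I.potential univ + 1)) ≤ I.potential univ :=
    sum_le_sum_of_subset (subset_univ _)
  have := hmono.id_le (I.potential univ + 1)
  simp only [id, Function.comp_apply] at this
  omega

end Potential

section StableConfigurations

variable (I) in
def Abandoned (C D : Finset (Sym2 P)) (u : P × P) : Prop :=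
  s(u.1, u.2) ∈ C ∧ s(u.1, u.2) ∉ D ∧ ¬ I.Willing D u.2 u.1

lemma IsStable.abandoned_or_abandoned (hD : I.IsStable D) (hC : I.IsConfig C)
    (hxyC : s(x, y) ∈ C) (hxyD : s(x, y) ∉ D) :
    I.Abandoned C D (x, y) ∨ I.Abandoned C D (y, x) := by
  by_cases hyx : I.Willing D y x
  · refine .inr ⟨by rwa [Sym2.eq_swap], by rwa [Sym2.eq_swap], fun hxy => ?_⟩
    exact hD.2 x y ⟨hC.1 _ hxyC, hxyD, hxy, hyx⟩
  · exact .inl ⟨hxyC, hxyD, hyx⟩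

lemma prefers_of_not_willing (hD : I.IsConfig D) (hyx : I.G.Adj y x) (hx : x ∉ mates D y)
    (hwill : ¬ I.Willing D y x) (hw : w ∈ mates D y) : I.Prefers y w x := by
  refine ⟨hD.adj hw, hyx, lt_of_le_of_ne (not_lt.1 fun hlt => hwill (.inr ⟨w, hw, hlt⟩)) ?_⟩
  intro hrank
  exact hx (I.rank_injOn y (hD.adj hw) hyx hrank ▸ hw)

/-- Since `y` is full in `D` but keeps `x` in `C`, it has a `D`-mate `z` outside `C`, which
it prefers to `x`; by stability of `C`, `z` in turn has no room for `y` in `C`. -/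
lemma Abandoned.exists_pivotStep (hC : I.IsStable C) (hD : I.IsStable D) {u : P × P}
    (h : I.Abandoned C D u) : ∃ w, I.PivotStep u w ∧ I.Abandoned D C w := by
  obtain ⟨x, y⟩ := u
  obtain ⟨hxyC, hxyD, hwill⟩ := h
  have hxC : x ∈ mates C y := mem_mates.2 (by rwa [Sym2.eq_swap])
  have hxD : x ∉ mates D y := fun h => hxyD (by rwa [Sym2.eq_swap, ← mem_mates])
  have hfull : I.b y ≤ #(mates D y) := not_lt.1 fun h => hwill (.inl h)
  have hcard : #((mates C y).erase x) < #(mates D y) := by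
    have := hC.1.2 y
    have := card_pos.2 ⟨x, hxC⟩
    rw [card_erase_of_mem hxC]
    omega
  obtain ⟨z, hzD, hzC⟩ := exists_mem_notMem_of_card_lt_card hcard
  have hzC : z ∉ mates C y := fun h => hzC (mem_erase.2 ⟨fun hzx => hxD (hzx ▸ hzD), h⟩)
  have hzx : I.Prefers y z x := prefers_of_not_willing hD.1 (hC.1.adj hxC) hxD hwill hzD
  refine ⟨(y, z), ⟨rfl, hzx⟩, mem_mates.1 hzD, fun h => hzC (mem_mates.2 h), fun hzy => ?_⟩
  exact hC.2 y z ⟨hzx.1, fun h => hzC (mem_mates.2 h), .inr ⟨x, hxC, hzx.2.2⟩, hzy⟩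

theorem subset_of_isStable (hI : I.Acyclic) (hC : I.IsStable C) (hD : I.IsStable D) :
    C ⊆ D := by
  intro e heC
  by_contra heD
  induction e using Sym2.ind with
  | _ x y =>
  obtain ⟨u, hu, hmin⟩ := (wellFounded_pivotStep hI).has_min
    {u | I.Abandoned C D u ∨ I.Abandoned D C u}
    (((hD.abandoned_or_abandoned hC.1 heC heD).elim (⟨_, .inl ·⟩) (⟨_, .inl ·⟩)))
  rcases hu with hu | hu
  · obtain ⟨w, hstep, hw⟩ := hu.exists_pivotStep hC hD
    exact hmin w (.inr hw) hstep
  · obtain ⟨w, hstep, hw⟩ := hu.exists_pivotStep hD hC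
    exact hmin w (.inl hw) hstep

theorem eq_of_isStable (hI : I.Acyclic) (hC : I.IsStable C) (hD : I.IsStable D) : C = D :=
  (subset_of_isStable hI hC hD).antisymm (subset_of_isStable hI hD hC)

end StableConfigurations

end PrefInstance

/-- In an acyclic instance, starting from any configuration,
every maximal sequence of active initiatives (one ending at a configuration that
admits no blocking pair) is finite and terminates at the unique stable
configuration of the instance. -/
theorem acyclic_maximal_sequence_terminates (I : PrefInstance P) (hI : I.Acyclic) :
    (∀ f : ℕ → Finset (Sym2 P), I.IsConfig (f 0) →
        ¬ ∀ i : ℕ, I.ActiveStep (f i) (f (i + 1))) ∧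
    ∀ (k : ℕ) (f : ℕ → Finset (Sym2 P)), I.IsConfig (f 0) →
      (∀ i < k, I.ActiveStep (f i) (f (i + 1))) →
      (∀ p q : P, ¬ I.BlockingPair (f k) p q) →
      I.IsStable (f k) ∧ ∀ D : Finset (Sym2 P), I.IsStable D → D = f k := by
  refine ⟨fun f h0 => not_forall_activeStep hI h0, fun k f h0 hf hmax => ?_⟩
  have hstable : I.IsStable (f k) := ⟨isConfig_of_forall_activeStep h0 hf, hmax⟩
  exact ⟨hstable, fun D hD => eq_of_isStable hI hD hstable⟩
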